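/- Every infinite mad family contained in ℬ_T has cardinality exactly the continuum; i.e., 𝔞(ℬ_T) = 𝔠. -/

import Mathlib

open Cardinal Set

/-- The full binary tree `T = 2^{<ω}`, modeled as finite lists of booleans;
`s ≤ t` iff `t` is a prefix of `s` (i.e. `s` extends `t`). -/
abbrev BinTree := List Bool

/-- The restriction `f↾n ∈ 2^{<ω}` of `f ∈ 2^ω`. -/
def restr (f : ℕ → Bool) (n : ℕ) : BinTree := List.ofFn (fun i : Fin n => f i)

/-- The branch `B(f) = { f↾n : n ∈ ω }` induced by `f ∈ 2^ω`. -/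
def branch (f : ℕ → Bool) : Set BinTree := Set.range (restr f)

/-- `⌊X⌋ = { f ∈ 2^ω : |B(f) ∩ X| = ℵ₀ }`. -/
def floorSet (X : Set BinTree) : Set (ℕ → Bool) := {f | (branch f ∩ X).Infinite}

/-- `X` is covered by finitely many branches of `T`. -/
def CoveredByFinitelyManyBranches (X : Set BinTree) : Prop :=
  ∃ s : Finset (ℕ → Bool), X ⊆ ⋃ f ∈ s, branch f

/-- `X` contains no infinite antichain (w.r.t. the prefix/extension order on `T`). -/
def NoInfiniteAntichain (X : Set BinTree) : Prop :=
  ¬ ∃ A ⊆ X, A.Infinite ∧ IsAntichain (· <+: ·) A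

/-- The class `ℬ_T` of infinite subsets of `T` containing no infinite antichain. -/
def Bclass : Set (Set BinTree) := { X | X.Infinite ∧ NoInfiniteAntichain X }

/-- The class `𝒜_T` of infinite antichains of `T`. -/
def Aclass : Set (Set BinTree) := { X | X.Infinite ∧ IsAntichain (· <+: ·) X }

/-- The class `𝒩𝒟_T` of infinite `X ⊆ T` with `⌊X⌋` nowhere dense in Cantor space. -/
def NDclass : Set (Set BinTree) := { X | X.Infinite ∧ IsNowhereDense (floorSet X) }

/-- `σ` is the standard fair-coin product measure on `2^ω`, characterized as a
probability measure giving each basic clopen set `{ f : f↾ℓ(t) = t }` measure `2^{-ℓ(t)}`. -/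
def IsCantorMeasure (σ : MeasureTheory.Measure (ℕ → Bool)) : Prop :=
  MeasureTheory.IsProbabilityMeasure σ ∧
    ∀ t : BinTree, σ { f | restr f t.length = t } = (2 : ENNReal)⁻¹ ^ t.length

/-- The class `𝒩_T` (w.r.t. a measure `σ` on `2^ω`) of infinite `X ⊆ T` with `σ(⌊X⌋) = 0`. -/
def Nclass (σ : MeasureTheory.Measure (ℕ → Bool)) : Set (Set BinTree) :=
  { X | X.Infinite ∧ σ (floorSet X) = 0 }

/-- Pairwise almost disjoint family of infinite sets. -/
def ADFamily {α : Type*} (F : Set (Set α)) : Prop :=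
  (∀ X ∈ F, X.Infinite) ∧ F.Pairwise fun X Y => (X ∩ Y).Finite

/-- `F` is a maximal almost disjoint family within `𝒳`. -/
def MadIn {α : Type*} (𝒳 F : Set (Set α)) : Prop :=
  F ⊆ 𝒳 ∧ ADFamily F ∧ ∀ Y ∈ 𝒳, ∃ X ∈ F, (Y ∩ X).Infinite

/-- The collection `[α]^{ℵ₀}` of all infinite subsets of `α`. -/
def infSets (α : Type*) : Set (Set α) := { X | X.Infinite }

/-- `𝔞(𝒳)`: the least cardinality of an infinite mad family within `𝒳`. -/
noncomputable def aInv {α : Type*} (𝒳 : Set (Set α)) : Cardinal :=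
  sInf { c : Cardinal | ∃ F, F.Infinite ∧ MadIn 𝒳 F ∧ #F = c }

/-- `cov(ℳ)`: the least number of meager subsets of `2^ω` covering `2^ω`. -/
noncomputable def covMeager : Cardinal :=
  sInf { c : Cardinal | ∃ S : Set (Set (ℕ → Bool)),
    (∀ A ∈ S, IsMeagre A) ∧ ⋃₀ S = Set.univ ∧ #S = c }

/-- `cov(𝒩)`: the least number of `σ`-null subsets of `2^ω` covering `2^ω`. -/
noncomputable def covNull (σ : MeasureTheory.Measure (ℕ → Bool)) : Cardinal :=
  sInf { c : Cardinal | ∃ S : Set (Set (ℕ → Bool)),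
    (∀ A ∈ S, σ A = 0) ∧ ⋃₀ S = Set.univ ∧ #S = c }

/-- `F^⊥`: the family of infinite sets almost disjoint from every member of `F`. -/
def perp {α : Type*} (F : Set (Set α)) : Set (Set α) :=
  { Y | Y.Infinite ∧ ∀ X ∈ F, (Y ∩ X).Finite }

/-- Membership in the ideal `ℐ(G)` generated by `G` together with the finite sets:
`S ⊆* ∪G'` for some finite `G' ⊆ G`. -/
def InIdeal {α : Type*} (G : Set (Set α)) (S : Set α) : Prop :=
  ∃ G' : Finset (Set α), ↑G' ⊆ G ∧ (S \ ⋃₀ ↑G').Finite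

/-- `𝔞⁺(F) = 𝔞(F^⊥)`. -/
noncomputable def aPlus {α : Type*} (F : Set (Set α)) : Cardinal := aInv (perp F)

/-- `B` almost decides `F`: `B^⊥` is exactly the family of infinite members of
the ideal generated by `F \ B` and the finite sets. -/
def AlmostDecides {α : Type*} (B F : Set (Set α)) : Prop :=
  perp B = { Y | Y.Infinite ∧ InIdeal (F \ B) Y }

/-- A subset `C` of a poset is centered: every finite subset of `C` has a common
lower bound. -/
def Centered {P : Type*} [Preorder P] (C : Set P) : Prop :=
  ∀ s : Finset P, ↑s ⊆ C → ∃ p, ∀ q ∈ s, p ≤ q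

/-- A poset is σ-centered: it is a countable union of centered subsets. -/
def SigmaCentered (P : Type*) [Preorder P] : Prop :=
  ∃ C : ℕ → Set P, (∀ n, Centered (C n)) ∧ ⋃ n, C n = Set.univ

/-- `D` is dense (below every condition) in the poset `P`. -/
def DenseBelow {P : Type*} [Preorder P] (D : Set P) : Prop :=
  ∀ p : P, ∃ q ∈ D, q ≤ p

/-- `G` is a filter on the poset `P`. -/
def IsFilterOn {P : Type*} [Preorder P] (G : Set P) : Prop :=
  (∀ p ∈ G, ∀ q, p ≤ q → q ∈ G) ∧ ∀ p ∈ G, ∀ q ∈ G, ∃ r ∈ G, r ≤ p ∧ r ≤ q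

/-- Martin's axiom for σ-centered posets: for every nonempty σ-centered poset and
fewer than continuum many dense sets there is a filter meeting them all. -/
def MASigmaCentered : Prop :=
  ∀ (P : Type) (_ : Preorder P) (_ : Nonempty P), SigmaCentered P →
    ∀ 𝒟 : Set (Set P), #𝒟 < Cardinal.continuum → (∀ D ∈ 𝒟, DenseBelow D) →
      ∃ G : Set P, IsFilterOn G ∧ ∀ D ∈ 𝒟, (G ∩ D).Nonempty

/-!
The nodes `offBranch g d = g↾d ⌢ ¬g(d)`, where a path leaves the branch of `g` at height `d`,
are pairwise incomparable. Hence a set `X` without infinite antichains reaches only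
finitely many of them, i.e. above some `g↾N` every element of `X` lies on the branch of `g`.
Combined with König's lemma (applied to the nodes with infinitely many elements of `X`, resp.
of `⌊X⌋`, above them) this shows that every `X ∈ ℬ_T` meets some branch infinitely, and that
`⌊X⌋` is finite. The first fact makes the `𝔠` many branches a mad family in `ℬ_T`. By the second,
if `F` is an infinite mad family in `ℬ_T`, then `2^ω = ⋃_{X ∈ F} ⌊X⌋` is a union of `|F|` finite
sets, so `|F| ≥ 𝔠`.
-/

universe u

lemma restr_length (f : ℕ → Bool) (n : ℕ) : (restr f n).length = n := List.length_ofFn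

lemma restr_succ (f : ℕ → Bool) (n : ℕ) : restr f (n + 1) = restr f n ++ [f n] := by
  rw [restr, List.ofFn_succ']
  simp [restr, List.concat_eq_append]

lemma getElem?_restr (f : ℕ → Bool) (n i : ℕ) :
    (restr f n)[i]? = if i < n then some (f i) else none := by
  simp [restr, List.getElem?_ofFn]

lemma restr_prefix_restr (f : ℕ → Bool) {m n : ℕ} (h : m ≤ n) : restr f m <+: restr f n := by
  induction n, h using Nat.le_induction with
  | base => exact List.prefix_refl _
  | succ n _ ih => exact ih.trans (restr_succ f n ▸ List.prefix_append _ _)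

lemma eq_restr_of_prefix_restr {f : ℕ → Bool} {t : BinTree} {n : ℕ} (h : t <+: restr f n) :
    t = restr f t.length := by
  induction n with
  | zero => obtain rfl := List.prefix_nil.mp h; rfl
  | succ n ih =>
    rw [restr_succ, List.prefix_concat_iff] at h
    rcases h with rfl | h
    · rw [List.length_append, List.length_singleton, restr_length, restr_succ]
    · exact ih h

lemma restr_injective (f : ℕ → Bool) : Function.Injective (restr f) := fun m n h => by
  simpa [restr_length] using congrArg List.length h

lemma mem_branch_iff {f : ℕ → Bool} {t : BinTree} : t ∈ branch f ↔ restr f t.length = t :=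
  ⟨by rintro ⟨n, rfl⟩; rw [restr_length], fun h => ⟨_, h⟩⟩

lemma nil_mem_branch (f : ℕ → Bool) : [] ∈ branch f := ⟨0, rfl⟩

lemma branch_infinite (f : ℕ → Bool) : (branch f).Infinite :=
  Set.infinite_range_of_injective (restr_injective f)

lemma branch_inter_branch_finite {f g : ℕ → Bool} (hfg : f ≠ g) :
    (branch f ∩ branch g).Finite := by
  obtain ⟨d, hd⟩ := Function.ne_iff.mp hfg
  refine ((Set.finite_Iic d).image (restr f)).subset ?_
  rintro _ ⟨⟨n, rfl⟩, m, hm⟩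
  refine ⟨n, Set.mem_Iic.mpr (not_lt.mp fun hdn => hd ?_), rfl⟩
  obtain rfl : m = n := by simpa [restr_length] using congrArg List.length hm
  simpa [getElem?_restr, hdn] using congrArg (·[d]?) hm.symm

lemma branch_injective : Function.Injective branch := fun f g h => by
  by_contra hfg
  exact branch_infinite f (by simpa [h] using branch_inter_branch_finite hfg)

lemma branch_mem_Bclass (f : ℕ → Bool) : branch f ∈ Bclass := by
  refine ⟨branch_infinite f, fun ⟨A, hA, hAinf, hAanti⟩ => ?_⟩
  obtain ⟨_, ha, _, hb, hab⟩ := hAinf.nontrivial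
  obtain ⟨m, rfl⟩ := hA ha
  obtain ⟨n, rfl⟩ := hA hb
  rcases le_total m n with h | h
  · exact hAanti ha hb hab (restr_prefix_restr f h)
  · exact hAanti hb ha hab.symm (restr_prefix_restr f h)

lemma exists_forall_restr_of_forall_exists {Q : BinTree → Prop} (h₀ : Q [])
    (hstep : ∀ t, Q t → ∃ b, Q (t ++ [b])) : ∃ g : ℕ → Bool, ∀ n, Q (restr g n) := by
  choose! b hb using hstep
  let u : ℕ → BinTree := fun n => Nat.rec [] (fun _ t => t ++ [b t]) n
  have hu : ∀ n, restr (fun n => b (u n)) n = u n := by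
    intro n
    induction n with
    | zero => rfl
    | succ n ih => rw [restr_succ, ih]
  refine ⟨fun n => b (u n), fun n => ?_⟩
  rw [hu]
  induction n with
  | zero => exact h₀
  | succ n ih => exact hb _ ih

def offBranch (g : ℕ → Bool) (d : ℕ) : BinTree := restr g d ++ [!g d]

lemma not_offBranch_prefix_restr (g : ℕ → Bool) (d n : ℕ) : ¬ offBranch g d <+: restr g n := by
  intro h
  have := eq_restr_of_prefix_restr h
  simp [offBranch, restr_length, restr_succ] at this

lemma eq_of_offBranch_prefix_offBranch {g : ℕ → Bool} {d e : ℕ}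
    (h : offBranch g d <+: offBranch g e) : d = e := by
  rw [show offBranch g e = restr g e ++ [!g e] from rfl, List.prefix_concat_iff] at h
  rcases h with h | h
  · simpa [offBranch, restr_length] using congrArg List.length h
  · exact absurd h (not_offBranch_prefix_restr g d e)

lemma eq_of_offBranch_prefix_of_prefix {g : ℕ → Bool} {d e : ℕ} {x y : BinTree}
    (hx : offBranch g d <+: x) (hy : offBranch g e <+: y) (hxy : x <+: y) : d = e := by
  rcases List.prefix_or_prefix_of_prefix (hx.trans hxy) hy with h | h
  · exact eq_of_offBranch_prefix_offBranch h
  · exact (eq_of_offBranch_prefix_offBranch h).symm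

lemma mem_branch_or_exists_offBranch_prefix (g : ℕ → Bool) (x : BinTree) :
    x ∈ branch g ∨ ∃ d, offBranch g d <+: x := by
  induction x using List.reverseRecOn with
  | nil => exact Or.inl ⟨0, rfl⟩
  | append_singleton y b ih =>
    rcases ih with hy | ⟨d, hd⟩
    · rw [mem_branch_iff] at hy
      by_cases hb : b = g y.length
      · left
        rw [mem_branch_iff, List.length_append, List.length_singleton, restr_succ, hy, hb]
      · right
        exact ⟨y.length, by rw [offBranch, hy, Bool.eq_not.mpr hb]⟩
    · exact Or.inr ⟨d, hd.trans (List.prefix_append _ _)⟩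

lemma exists_offBranch_prefix {g : ℕ → Bool} {n : ℕ} {x : BinTree} (hn : restr g n <+: x)
    (hx : x ∉ branch g) : ∃ d, n ≤ d ∧ offBranch g d <+: x := by
  obtain ⟨d, hd⟩ := (mem_branch_or_exists_offBranch_prefix g x).resolve_left hx
  refine ⟨d, ?_, hd⟩
  rcases List.prefix_or_prefix_of_prefix hd hn with h | h
  · exact absurd h (not_offBranch_prefix_restr g d n)
  · rw [offBranch, List.prefix_concat_iff] at h
    rcases h with h | h
    · exact (not_offBranch_prefix_restr g d n (by rw [h]; rfl)).elim
    · simpa [restr_length] using h.length_le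

lemma finite_setOf_offBranch_prefix {X : Set BinTree} (hX : NoInfiniteAntichain X)
    (g : ℕ → Bool) : {d | ∃ x ∈ X, offBranch g d <+: x}.Finite := by
  by_contra hinf
  choose! x hxX hx using fun d (hd : d ∈ {d | ∃ x ∈ X, offBranch g d <+: x}) => hd
  have hinj : Set.InjOn x {d | ∃ x ∈ X, offBranch g d <+: x} := fun d hd e he hde =>
    eq_of_offBranch_prefix_of_prefix (hx d hd) (hx e he) (hde ▸ List.prefix_refl _)
  refine hX ⟨_, Set.image_subset_iff.mpr hxX, (Set.not_finite.mp hinf).image hinj, ?_⟩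
  rintro _ ⟨d, hd, rfl⟩ _ ⟨e, he, rfl⟩ hne hde
  exact hne (congrArg x (eq_of_offBranch_prefix_of_prefix (hx d hd) (hx e he) hde))

lemma exists_forall_prefix_mem_branch {X : Set BinTree} (hX : NoInfiniteAntichain X)
    (g : ℕ → Bool) : ∃ N, ∀ x ∈ X, restr g N <+: x → x ∈ branch g := by
  obtain ⟨N, hN⟩ := (finite_setOf_offBranch_prefix hX g).bddAbove
  refine ⟨N + 1, fun x hxX hgx => by_contra fun hx => ?_⟩
  obtain ⟨d, hNd, hd⟩ := exists_offBranch_prefix hgx hx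
  exact absurd (hN ⟨x, hxX, hd⟩) (by omega)

lemma exists_infinite_branch_inter {X : Set BinTree} (hX : X ∈ Bclass) :
    ∃ f, (branch f ∩ X).Infinite := by
  have hstep : ∀ t : BinTree, {x ∈ X | t <+: x}.Infinite →
      ∃ b, {x ∈ X | t ++ [b] <+: x}.Infinite := by
    intro t ht
    by_contra! hfin
    refine ht (((Set.finite_singleton t).union (Set.finite_iUnion hfin)).subset ?_)
    rintro x ⟨hxX, ⟨_ | ⟨b, r⟩, rfl⟩⟩
    · simp
    · exact Or.inr (Set.mem_iUnion.mpr ⟨b, hxX, r, by simp⟩)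
  have hnil : {x ∈ X | [] <+: x}.Infinite := by simpa using hX.1
  obtain ⟨g, hg⟩ := exists_forall_restr_of_forall_exists hnil hstep
  obtain ⟨N, hN⟩ := exists_forall_prefix_mem_branch hX.2 g
  refine ⟨g, (hg N).mono ?_⟩
  rintro x ⟨hxX, hx⟩
  exact ⟨hN x hxX hx, hxX⟩

lemma floorSet_finite {X : Set BinTree} (hX : NoInfiniteAntichain X) : (floorSet X).Finite := by
  by_contra hinf
  have hstep : ∀ t : BinTree, {f ∈ floorSet X | t ∈ branch f}.Infinite →
      ∃ b, {f ∈ floorSet X | t ++ [b] ∈ branch f}.Infinite := by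
    intro t ht
    by_contra! hfin
    refine ht ((Set.finite_iUnion hfin).subset ?_)
    rintro f ⟨hf, n, rfl⟩
    exact Set.mem_iUnion.mpr ⟨f n, hf, n + 1, restr_succ f n⟩
  have hnil : {f ∈ floorSet X | [] ∈ branch f}.Infinite := by
    simpa [nil_mem_branch] using hinf
  obtain ⟨g, hg⟩ := exists_forall_restr_of_forall_exists hnil hstep
  obtain ⟨N, hN⟩ := exists_forall_prefix_mem_branch hX g
  refine hg N ((Set.finite_singleton g).subset fun f ⟨hf, hgf⟩ => by_contra fun hfg => hf ?_)
  refine ((branch_inter_branch_finite hfg).union (List.finite_length_le Bool N)).subset ?_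
  rintro _ ⟨⟨n, rfl⟩, hx⟩
  rcases le_total n N with hnN | hNn
  · exact Or.inr (by simpa [restr_length] using hnN)
  · rw [mem_branch_iff, restr_length] at hgf
    exact Or.inl ⟨⟨n, rfl⟩, hN _ hx (hgf ▸ restr_prefix_restr f hNn)⟩

lemma Cardinal.mk_le_of_iUnion_countable_eq_univ {α ι : Type u} [Infinite ι] {A : ι → Set α}
    (hA : ∀ i, (A i).Countable) (hcov : ⋃ i, A i = Set.univ) : #α ≤ #ι :=
  calc #α = #(⋃ i, A i) := by rw [hcov, mk_univ]
    _ ≤ #ι * ⨆ i, #(A i) := mk_iUnion_le A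
    _ ≤ #ι * ℵ₀ := by gcongr; exact ciSup_le' fun i => (hA i).le_aleph0
    _ = #ι := mul_aleph0_eq (aleph0_le_mk ι)

lemma mk_nat_to_bool : #(ℕ → Bool) = 𝔠 := by
  simp [two_power_aleph0]

lemma Cardinal.mk_le_continuum_of_countable {α : Type*} [Countable α] (F : Set (Set α)) :
    #F ≤ 𝔠 :=
  calc #F ≤ #(Set α) := mk_set_le F
    _ = 2 ^ #α := mk_set
    _ ≤ 2 ^ ℵ₀ := power_le_power_left two_ne_zero mk_le_aleph0
    _ = 𝔠 := two_power_aleph0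

lemma continuum_le_mk_of_madIn {F : Set (Set BinTree)} (hF : F.Infinite) (hmad : MadIn Bclass F) :
    𝔠 ≤ #F := by
  have := hF.to_subtype
  rw [← mk_nat_to_bool]
  refine Cardinal.mk_le_of_iUnion_countable_eq_univ (A := fun X : F => floorSet X)
    (fun X => (floorSet_finite (hmad.1 X.2).2).countable) (eq_univ_of_forall fun f => ?_)
  obtain ⟨X, hXF, hX⟩ := hmad.2.2 (branch f) (branch_mem_Bclass f)
  exact mem_iUnion.mpr ⟨⟨X, hXF⟩, hX⟩

lemma madIn_range_branch : MadIn Bclass (range branch) := by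
  refine ⟨range_subset_iff.mpr branch_mem_Bclass, ⟨?_, ?_⟩, fun Y hY => ?_⟩
  · rintro _ ⟨f, rfl⟩
    exact branch_infinite f
  · rintro _ ⟨f, rfl⟩ _ ⟨g, rfl⟩ hfg
    exact branch_inter_branch_finite fun h => hfg (congrArg branch h)
  · obtain ⟨f, hf⟩ := exists_infinite_branch_inter hY
    exact ⟨branch f, mem_range_self f, inter_comm Y _ ▸ hf⟩

lemma mk_range_branch : #(range branch) = 𝔠 := by
  rw [mk_range_eq _ branch_injective, mk_nat_to_bool]

/-- Every infinite mad family within `ℬ_T` has cardinality exactly the continuum;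
i.e. `𝔞(ℬ_T) = 𝔠`. -/
theorem stmt3 :
    (∀ F : Set (Set BinTree), F.Infinite → MadIn Bclass F → #F = Cardinal.continuum) ∧
    aInv Bclass = Cardinal.continuum := by
  have hmad : ∀ F : Set (Set BinTree), F.Infinite → MadIn Bclass F → #F = 𝔠 :=
    fun F hF hFmad => (Cardinal.mk_le_continuum_of_countable F).antisymm (continuum_le_mk_of_madIn hF hFmad)
  have hbranch : (range branch).Infinite :=
    infinite_coe_iff.mp (Cardinal.infinite_iff.mpr (mk_range_branch ▸ aleph0_le_continuum))
  refine ⟨hmad, le_antisymm ?_ ?_⟩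
  · exact csInf_le' ⟨_, hbranch, madIn_range_branch, mk_range_branch⟩
  · refine le_csInf ⟨_, _, hbranch, madIn_range_branch, mk_range_branch⟩ ?_
    rintro _ ⟨F, hF, hFmad, rfl⟩
    exact (hmad F hF hFmad).ge
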